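/- arXiv:1702.07484 — 4 statements merged into one kernel-verified Lean document; each statement's English description precedes it below -/
import Mathlib

section
/- Let f be an energy function and x ∈ ℝ≥0 with f(x) defined and f(x) < x. Then, setting M = x − f(x) > 0, one has f^n(x) ≤ x − n·M whenever f^n(x) is defined; consequently there exists k ≥ 0 with f^k(x) = ⊥ (i.e., the iteration eventually becomes undefined). -/
open scoped ENNReal

/-- An energy function, cf. the paper: a partial function on `ℝ≥0 ∪ {⊥, ∞}`
(`⊥` = undefined) with `f ⊥ = ⊥`, undefinedness downward closed, and
satisfying `f y - f x ≥ y - x` (as `f x + (y - x) ≤ f y`) for `x ≤ y` where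
both values are defined. -/
def IsEnergy (f : WithBot ℝ≥0∞ → WithBot ℝ≥0∞) : Prop :=
  f ⊥ = ⊥ ∧
  (∀ x y : WithBot ℝ≥0∞, x ≤ y → f y = ⊥ → f x = ⊥) ∧
  (∀ x y : ℝ≥0∞, x ≤ y → ∀ fx fy : ℝ≥0∞,
    f (x : ℝ≥0∞) = (fx : WithBot ℝ≥0∞) → f (y : ℝ≥0∞) = (fy : WithBot ℝ≥0∞) →
    fx + (y - x) ≤ fy)

/-- If `f` is an energy function, `x` a finite energy value with `f x` defined
and `f x < x`, then with `M = x - f x > 0` one has `f^n x ≤ x - n • M` whenever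
`f^n x` is defined; consequently there is `k ≥ 0` with `f^k x = ⊥`. -/
theorem energy_iterate_decreasing (f : WithBot ℝ≥0∞ → WithBot ℝ≥0∞)
    (hf : IsEnergy f) (x fx : ℝ≥0∞) (hxfin : x ≠ ∞)
    (hfx : f (x : ℝ≥0∞) = (fx : WithBot ℝ≥0∞)) (hlt : fx < x) :
    (∀ n : ℕ, ∀ y : ℝ≥0∞, f^[n] (x : ℝ≥0∞) = (y : WithBot ℝ≥0∞) →
      y ≤ x - (n : ℝ≥0∞) * (x - fx)) ∧
    ∃ k : ℕ, f^[k] (x : ℝ≥0∞) = ⊥ := by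
  obtain ⟨hbot, hdown, henergy⟩ := hf
  set M : ℝ≥0∞ := x - fx with hM
  have hM0 : 0 < M := tsub_pos_of_lt hlt
  have key : ∀ n : ℕ, ∀ y : ℝ≥0∞, f^[n] (x : ℝ≥0∞) = (y : WithBot ℝ≥0∞) →
      y ≤ x - (n : ℝ≥0∞) * M := by
    intro n
    induction n with
    | zero =>
      intro y hy
      simp only [Function.iterate_zero, id_eq] at hy
      have : y = x := by exact_mod_cast hy.symm
      simp [this]
    | succ n ih =>
      intro y hy
      rw [Function.iterate_succ_apply'] at hy
      -- f^[n] x must be defined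
      have hne : f^[n] (x : ℝ≥0∞) ≠ ⊥ := by
        intro h
        rw [h, hbot] at hy
        exact absurd hy.symm (by simp)
      obtain ⟨z, hz⟩ := WithBot.ne_bot_iff_exists.mp hne
      have hzle : z ≤ x - (n : ℝ≥0∞) * M := ih z hz.symm
      have hzx : z ≤ x := hzle.trans tsub_le_self
      -- energy inequality between z and x
      have hen : y + (x - z) ≤ fx := henergy z x hzx y fx (by rw [← hz] at hy; exact hy) hfx
      by_cases hcase : (n : ℝ≥0∞) * M ≤ x
      · -- x - z ≥ n * M
        have h1 : (n : ℝ≥0∞) * M ≤ x - z := by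
          have := tsub_le_tsub_left hzle x
          calc (n : ℝ≥0∞) * M = x - (x - (n : ℝ≥0∞) * M) := by
                rw [ENNReal.sub_sub_cancel hxfin hcase]
            _ ≤ x - z := this
        have h2 : y + (n : ℝ≥0∞) * M ≤ fx := le_trans (add_le_add le_rfl h1) hen
        have h3 : y ≤ fx - (n : ℝ≥0∞) * M := ENNReal.le_sub_of_add_le_right (ne_top_of_le_ne_top hxfin hcase) h2
        calc y ≤ fx - (n : ℝ≥0∞) * M := h3
          _ = x - M - (n : ℝ≥0∞) * M := by
              rw [hM, ENNReal.sub_sub_cancel hxfin hlt.le]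
          _ = x - (M + (n : ℝ≥0∞) * M) := by rw [tsub_tsub]
          _ = x - ((n : ℝ≥0∞) + 1) * M := by ring_nf
          _ = x - ((n + 1 : ℕ) : ℝ≥0∞) * M := by push_cast; ring_nf
      · -- then x - n*M = 0, so z = 0, and energy gives contradiction
        push_neg at hcase
        have hz0 : z = 0 := le_antisymm (by
          have : x - (n : ℝ≥0∞) * M = 0 := tsub_eq_zero_of_le hcase.le
          rwa [this] at hzle) (zero_le)
        rw [hz0, tsub_zero] at hen
        have : x ≤ fx := le_trans (self_le_add_left x y) hen
        exact absurd this (not_le.mpr hlt)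
  refine ⟨key, ?_⟩
  -- choose n with x < n * M
  have hMne : M ≠ 0 := hM0.ne'
  obtain ⟨n, hn⟩ : ∃ n : ℕ, x / M < n := ENNReal.exists_nat_gt (ENNReal.div_lt_top hxfin hMne).ne
  have hxn : x < (n : ℝ≥0∞) * M := by
    rcases eq_or_ne M ∞ with hMtop | hMtop
    · have hn0 : (n : ℝ≥0∞) ≠ 0 := by
        rcases Nat.eq_zero_or_pos n with h | h
        · subst h; simp [ENNReal.div_eq_zero_iff, hxfin, hMtop] at hn
        · exact_mod_cast h.ne'
      rw [hMtop, ENNReal.mul_top hn0]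
      exact hxfin.lt_top
    · rwa [ENNReal.div_lt_iff (Or.inl hMne) (Or.inl hMtop)] at hn
  by_cases hdef : f^[n] (x : ℝ≥0∞) = ⊥
  · exact ⟨n, hdef⟩
  obtain ⟨z, hz⟩ := WithBot.ne_bot_iff_exists.mp hdef
  have hzle := key n z hz.symm
  have hz0 : z = 0 := le_antisymm (by rwa [tsub_eq_zero_of_le hxn.le] at hzle) (zero_le)
  -- f^[n+1] x = f 0 must be ⊥
  refine ⟨n + 1, ?_⟩
  rw [Function.iterate_succ_apply', ← hz, hz0]
  by_contra hne2
  obtain ⟨w, hw⟩ := WithBot.ne_bot_iff_exists.mp hne2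
  have hen := henergy 0 x (zero_le) w fx hw.symm hfx
  rw [tsub_zero] at hen
  have : x ≤ fx := le_trans (self_le_add_left x w) hen
  exact absurd this (not_le.mpr hlt)
end

section
/- For an energy function f, define f^ω : ℝ≥0 ∪ {⊥, ∞} → Bool by f^ω(x) = true iff the infinite iteration x, f(x), f(f(x)), … never becomes ⊥ (undefined). Then f^ω(x) = false if x = ⊥ or f(x) < x, and f^ω(x) = true otherwise (i.e., when x ≠ ⊥ and f(x) ≥ x, including f(x) = ∞). -/
open scoped ENNReal

/-- For an energy function `f`, the `ω`-iteration `f^ω x` — true iff the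
iteration `x, f x, f (f x), …` never becomes `⊥` — is false if `x = ⊥` or
`f x < x`, and true otherwise (i.e. when `x ≠ ⊥` and `f x ≥ x`, including
`f x = ∞`). -/
theorem energy_omega (f : WithBot ℝ≥0∞ → WithBot ℝ≥0∞) (hf : IsEnergy f) :
    ∀ x : WithBot ℝ≥0∞, (∀ n : ℕ, f^[n] x ≠ ⊥) ↔ (x ≠ ⊥ ∧ x ≤ f x) := by
  obtain ⟨hbot, hdown, hE⟩ := hf
  intro x
  constructor
  · intro h
    have hx0 : x ≠ ⊥ := h 0
    refine ⟨hx0, ?_⟩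
    by_contra hle
    push_neg at hle
    obtain ⟨a, rfl⟩ := WithBot.ne_bot_iff_exists.mp hx0
    have hc : ∀ n : ℕ, ∃ c : ℝ≥0∞, f^[n+1] (a : WithBot ℝ≥0∞) = (c : WithBot ℝ≥0∞) := by
      intro n
      obtain ⟨c, hc⟩ := WithBot.ne_bot_iff_exists.mp (h (n+1))
      exact ⟨c, hc.symm⟩
    choose c hcn using hc
    have hc0 : f (a : WithBot ℝ≥0∞) = (c 0 : WithBot ℝ≥0∞) := by
      simpa using hcn 0
    have hca : c 0 < a := by
      rw [hc0] at hle; exact_mod_cast hle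
    have hc0top : c 0 ≠ ⊤ := (hca.trans_le le_top).ne
    set d : ℝ≥0∞ := a - c 0 with hd
    have hd0 : d ≠ 0 := by
      simpa [hd] using (tsub_pos_of_lt hca).ne'
    have hstep : ∀ n, f ((c n : ℝ≥0∞) : WithBot ℝ≥0∞) = (c (n+1) : WithBot ℝ≥0∞) := by
      intro n
      rw [← hcn n, ← Function.iterate_succ_apply' f (n+1)]
      exact hcn (n+1)
    have key : ∀ n, c (n+1) + d ≤ c n ∧ c n ≠ ⊤ := by
      intro n
      induction n with
      | zero =>
        exact ⟨hE (c 0) a hca.le (c 1) (c 0) (hstep 0) hc0, hc0top⟩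
      | succ n ih =>
        obtain ⟨ih, hntop⟩ := ih
        have hle' : c (n+1) ≤ c n := le_trans (le_add_right le_rfl) ih
        have h1top : c (n+1) ≠ ⊤ := ne_top_of_le_ne_top hntop hle'
        have h2 := hE (c (n+1)) (c n) hle' (c (n+2)) (c (n+1)) (hstep (n+1)) (hstep n)
        have hdle : d ≤ c n - c (n+1) := ENNReal.le_sub_of_add_le_left h1top ih
        refine ⟨?_, h1top⟩
        calc c (n+2) + d ≤ c (n+2) + (c n - c (n+1)) := by gcongr
          _ ≤ c (n+1) := h2
    have hsum : ∀ n : ℕ, c n + n * d ≤ c 0 := by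
      intro n
      induction n with
      | zero => simp
      | succ n ih =>
        calc c (n+1) + (n+1 : ℕ) * d = (c (n+1) + d) + n * d := by push_cast; ring
          _ ≤ c n + n * d := by gcongr; exact (key n).1
          _ ≤ c 0 := ih
    have hdtop : c 0 / d ≠ ⊤ := (ENNReal.div_lt_top hc0top hd0).ne
    obtain ⟨n, hn⟩ := ENNReal.exists_nat_gt hdtop
    have : c 0 < n * d := (ENNReal.div_lt_iff (Or.inl hd0) (Or.inr hc0top)).mp hn
    have : (n : ℝ≥0∞) * d ≤ c 0 := le_trans (le_add_left le_rfl) (hsum n)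
    exact absurd this (not_le.mpr ‹c 0 < n * d›)
  · rintro ⟨hx0, hxf⟩
    have main : ∀ n : ℕ, f^[n] x ≠ ⊥ ∧ f^[n] x ≤ f^[n+1] x := by
      intro n
      induction n with
      | zero => exact ⟨hx0, by simpa using hxf⟩
      | succ n ih =>
        obtain ⟨hne, hle⟩ := ih
        have hy1 : f^[n+1] x = f (f^[n] x) := Function.iterate_succ_apply' f n x
        rw [hy1] at hle
        set y := f^[n] x with hy
        have hfy : f y ≠ ⊥ := by
          intro hb
          rw [hb] at hle
          exact hne (le_bot_iff.mp hle)
        have hffy : f (f y) ≠ ⊥ := fun hb => hfy (hdown y (f y) hle hb)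
        obtain ⟨b, hb⟩ := WithBot.ne_bot_iff_exists.mp hne
        obtain ⟨fb, hfb⟩ := WithBot.ne_bot_iff_exists.mp hfy
        obtain ⟨ffb, hffb⟩ := WithBot.ne_bot_iff_exists.mp hffy
        have hble : b ≤ fb := by rw [← WithBot.coe_le_coe, hb, hfb]; exact hle
        have h2 := hE b fb hble fb ffb (by rw [hb]; exact hfb.symm) (by rw [hfb]; exact hffb.symm)
        have h3 : fb ≤ ffb := le_trans (le_add_right le_rfl) h2
        rw [Function.iterate_succ_apply' f (n+1) x, hy1]
        refine ⟨hfy, ?_⟩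
        rw [← hffb, ← hfb]
        exact_mod_cast h3
    exact fun n => (main n).1
end

section
/- The energy functions E with pointwise maximum as ⊕ (neutral element the constant-⊥ function) and composition as ⊗ (neutral element the identity) form an idempotent semiring: in particular composition distributes over pointwise maximum on both sides, because energy functions are monotone. -/
open scoped ENNReal

lemma IsEnergy.mono {f : WithBot ℝ≥0∞ → WithBot ℝ≥0∞} (hf : IsEnergy f) : Monotone f := by
  obtain ⟨hbot, hdown, hineq⟩ := hf
  intro x y hxy
  rcases eq_or_ne (f y) ⊥ with hy | hy
  · rw [hy, hdown x y hxy hy]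
  rcases eq_or_ne (f x) ⊥ with hx | hx
  · rw [hx]; exact bot_le
  rcases x with _ | x
  · exact absurd hbot hx
  rcases y with _ | y
  · exact absurd (le_bot_iff.mp hxy) (by simp)
  obtain ⟨fx, hfx⟩ := WithBot.ne_bot_iff_exists.mp hx
  obtain ⟨fy, hfy⟩ := WithBot.ne_bot_iff_exists.mp hy
  have := hineq x y (WithBot.coe_le_coe.mp hxy) fx fy hfx.symm hfy.symm
  rw [← hfx, ← hfy]
  exact_mod_cast le_trans (le_add_right le_rfl) this

/-- The energy functions with pointwise maximum as `⊕` (neutral element the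
constant-`⊥` function) and composition as `⊗` (neutral element the identity)
form an idempotent semiring; in particular composition distributes over
pointwise maximum on both sides, because energy functions are monotone. -/
theorem energy_idempotent_semiring :
    ∀ f g h : WithBot ℝ≥0∞ → WithBot ℝ≥0∞,
      IsEnergy f → IsEnergy g → IsEnergy h →
      -- (E, ⊔, const ⊥) is a commutative idempotent monoid
      ((fun x => f x ⊔ g x) = fun x => g x ⊔ f x) ∧
      ((fun x => (f x ⊔ g x) ⊔ h x) = fun x => f x ⊔ (g x ⊔ h x)) ∧
      ((fun x => f x ⊔ f x) = f) ∧
      ((fun x => f x ⊔ (⊥ : WithBot ℝ≥0∞)) = f) ∧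
      -- (E, ∘, id) is a monoid
      (h ∘ (g ∘ f) = (h ∘ g) ∘ f) ∧
      (f ∘ id = f) ∧ (id ∘ f = f) ∧
      -- composition distributes over pointwise maximum on both sides
      (h ∘ (fun x => f x ⊔ g x) = fun x => h (f x) ⊔ h (g x)) ∧
      ((fun x => f x ⊔ g x) ∘ h = fun x => f (h x) ⊔ g (h x)) ∧
      -- zero laws for the constant-⊥ function
      (f ∘ (fun _ : WithBot ℝ≥0∞ => (⊥ : WithBot ℝ≥0∞)) = fun _ => ⊥) ∧
      ((fun _ : WithBot ℝ≥0∞ => (⊥ : WithBot ℝ≥0∞)) ∘ f = fun _ => ⊥) := by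
  intro f g h hf hg hh
  refine ⟨funext fun x => sup_comm _ _, funext fun x => sup_assoc _ _ _,
    funext fun x => sup_idem _, funext fun x => sup_bot_eq _, rfl, rfl, rfl,
    funext fun x => ?_, rfl, funext fun x => hf.1, funext fun x => rfl⟩
  exact hh.mono.map_sup _ _
end

section
/- Let K be a bounded semiring (x ⊕ 1 = 1 for all x), so x* = 1 for all x ∈ K. Then for any n×n matrix M over K, the matrix star M*, defined by (M*)_{i,j} = ⊕ over all finite sequences i = k₁, k₂, …, k_m = j of the products M_{k₁,k₂} ⋯ M_{k_{m−1},k_m} (with the empty path from i to i contributing 1), is a finite sum: it equals ⊕ over only the sequences with pairwise distinct indices (simple paths). -/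
/-- The weight of a path in the complete graph on `Fin n` with edge weights
`M i j`: `pathWeight M i [k₁, …, k_m] = M i k₁ * M k₁ k₂ * ⋯ * M k_{m-1} k_m`,
with the empty path (from `i` to `i`) contributing `1`. -/
def pathWeight {n : ℕ} {K : Type*} [Semiring K]
    (M : Matrix (Fin n) (Fin n) K) : Fin n → List (Fin n) → K
  | _, [] => 1
  | i, j :: l => M i j * pathWeight M j l

/-- The finite sum of the weights of all simple paths (paths with pairwise
distinct indices) from `i` to `j`. -/
noncomputable def simpleStar {n : ℕ} {K : Type*} [Semiring K]
    (M : Matrix (Fin n) (Fin n) K) (i j : Fin n) : K :=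
  ∑ l : {l : List (Fin n) // l.Nodup},
    if (i :: l.1).Nodup ∧ (i :: l.1).getLast? = some j
    then pathWeight M i l.1 else 0

lemma pathWeight_append {n : ℕ} {K : Type*} [Semiring K]
    (M : Matrix (Fin n) (Fin n) K) :
    ∀ (l1 : List (Fin n)) (i x : Fin n) (l2 : List (Fin n)),
      pathWeight M i (l1 ++ x :: l2) = pathWeight M i (l1 ++ [x]) * pathWeight M x l2
  | [], i, x, l2 => by simp [pathWeight]
  | a :: t, i, x, l2 => by
    simp only [List.cons_append, List.append_eq, pathWeight,
      pathWeight_append M t a x l2, mul_assoc]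

lemma not_nodup_decomp {α : Type*} :
    ∀ (l : List α), ¬ l.Nodup → ∃ x l1 l2 l3, l = l1 ++ x :: (l2 ++ x :: l3)
  | [], h => absurd List.nodup_nil h
  | a :: t, h => by
    by_cases ha : a ∈ t
    · obtain ⟨s, u, rfl⟩ := List.append_of_mem ha
      exact ⟨a, [], s, u, rfl⟩
    · have ht : ¬ t.Nodup := fun hnd => h (List.nodup_cons.2 ⟨ha, hnd⟩)
      obtain ⟨x, l1, l2, l3, rfl⟩ := not_nodup_decomp t ht
      exact ⟨x, a :: l1, l2, l3, rfl⟩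

/-- In a bounded semiring `K` (`x + 1 = 1` for all `x`, whence `x* = 1`), the
matrix star `(M*)_{i,j}`, defined as the sum over all finite paths
`i = k₁, …, k_m = j` of the weights `M_{k₁,k₂} ⋯ M_{k_{m-1},k_m}` (empty path
contributing `1`), is a finite sum: it equals the sum over the simple paths
only.  Here this is expressed by saying that the finite sum `simpleStar M i j`
over simple paths is the supremum, in the natural order `a ≤ b ↔ a + b = b`,
of the weights of all paths from `i` to `j`. -/
theorem bounded_matrix_star_simple_paths (K : Type*) [Semiring K]
    (hb : ∀ x : K, x + 1 = 1) (n : ℕ) (M : Matrix (Fin n) (Fin n) K)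
    (i j : Fin n) :
    (∀ l : List (Fin n), (i :: l).getLast? = some j →
      pathWeight M i l + simpleStar M i j = simpleStar M i j) ∧
    (∀ b : K, (∀ l : List (Fin n), (i :: l).getLast? = some j →
        pathWeight M i l + b = b) →
      simpleStar M i j + b = b) := by
  have idem : ∀ a : K, a + a = a := by
    intro a
    calc a + a = a * (1 + 1) := by rw [mul_add, mul_one]
    _ = a := by rw [hb 1, mul_one]
  -- dropping a loop factor on the left
  have drop1 : ∀ y b : K, y * b + b = b := by
    intro y b
    calc y * b + b = (y + 1) * b := by rw [add_mul, one_mul]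
    _ = b := by rw [hb y, one_mul]
  have drop2 : ∀ a y b : K, a * (y * b) + a * b = a * b := by
    intro a y b
    calc a * (y * b) + a * b = a * (y * b + b) := by rw [mul_add]
    _ = a * b := by rw [drop1]
  constructor
  · -- every path weight is dominated by the sum over simple paths
    have key : ∀ m : ℕ, ∀ l : List (Fin n), l.length = m →
        (i :: l).getLast? = some j →
        pathWeight M i l + simpleStar M i j = simpleStar M i j := by
      intro m
      induction m using Nat.strong_induction_on with
      | _ m IH =>
        intro l hlen hlast
        by_cases hnd : (i :: l).Nodup
        · -- simple path: it is one of the summands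
          have hlnd : l.Nodup := hnd.of_cons
          set e : {l : List (Fin n) // l.Nodup} := ⟨l, hlnd⟩ with he
          have hmem : e ∈ (Finset.univ : Finset {l : List (Fin n) // l.Nodup}) :=
            Finset.mem_univ e
          set f : {l : List (Fin n) // l.Nodup} → K := fun l =>
            if (i :: l.1).Nodup ∧ (i :: l.1).getLast? = some j
            then pathWeight M i l.1 else 0 with hf
          have hfe : f e = pathWeight M i l := by
            show (if (i :: l).Nodup ∧ (i :: l).getLast? = some j
              then pathWeight M i l else 0) = pathWeight M i l
            exact if_pos ⟨hnd, hlast⟩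
          have hsum : simpleStar M i j = f e + ∑ x ∈ Finset.univ.erase e, f x :=
            (Finset.add_sum_erase _ f hmem).symm
          rw [hsum, hfe, ← add_assoc, idem]
        · -- there is a loop: remove it and use the induction hypothesis
          obtain ⟨x, l1, l2, l3, hdec⟩ := not_nodup_decomp _ hnd
          cases l1 with
          | nil =>
            -- i = x, l = l2 ++ i :: l3
            simp only [List.nil_append, List.cons.injEq] at hdec
            obtain ⟨rfl, rfl⟩ := hdec
            have hlast3 : (i :: l3).getLast? = some j := by
              rw [show (i :: (l2 ++ i :: l3)) = (i :: l2) ++ i :: l3 by simp,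
                List.getLast?_append_cons] at hlast
              exact hlast
            have hlt : l3.length < m := by
              subst hlen; simp [List.length_append]; omega
            have ih := IH l3.length hlt l3 rfl hlast3
            have hw : pathWeight M i (l2 ++ i :: l3) + pathWeight M i l3
                = pathWeight M i l3 := by
              rw [pathWeight_append]; exact drop1 _ _
            calc pathWeight M i (l2 ++ i :: l3) + simpleStar M i j
                = pathWeight M i (l2 ++ i :: l3) + (pathWeight M i l3 + simpleStar M i j) := by
                  rw [ih]
              _ = (pathWeight M i (l2 ++ i :: l3) + pathWeight M i l3) + simpleStar M i j := by
                  rw [add_assoc]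
              _ = pathWeight M i l3 + simpleStar M i j := by rw [hw]
              _ = simpleStar M i j := ih
          | cons a p =>
            simp only [List.cons_append, List.cons.injEq] at hdec
            obtain ⟨rfl, rfl⟩ := hdec
            have hlast' : (i :: (p ++ x :: l3)).getLast? = some j := by
              rw [show (i :: (p ++ x :: (l2 ++ x :: l3)))
                    = (i :: p ++ x :: l2) ++ x :: l3 by simp,
                List.getLast?_append_cons] at hlast
              rw [show (i :: (p ++ x :: l3)) = (i :: p) ++ x :: l3 by simp,
                List.getLast?_append_cons]
              exact hlast
            have hlt : (p ++ x :: l3).length < m := by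
              subst hlen; simp [List.length_append]
            have ih := IH _ hlt _ rfl hlast'
            have hw : pathWeight M i (p ++ x :: (l2 ++ x :: l3))
                + pathWeight M i (p ++ x :: l3) = pathWeight M i (p ++ x :: l3) := by
              rw [pathWeight_append M p i x (l2 ++ x :: l3),
                pathWeight_append M l2 x x l3, pathWeight_append M p i x l3]
              exact drop2 _ _ _
            calc pathWeight M i (p ++ x :: (l2 ++ x :: l3)) + simpleStar M i j
                = pathWeight M i (p ++ x :: (l2 ++ x :: l3))
                  + (pathWeight M i (p ++ x :: l3) + simpleStar M i j) := by rw [ih]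
              _ = (pathWeight M i (p ++ x :: (l2 ++ x :: l3))
                  + pathWeight M i (p ++ x :: l3)) + simpleStar M i j := by rw [add_assoc]
              _ = pathWeight M i (p ++ x :: l3) + simpleStar M i j := by rw [hw]
              _ = simpleStar M i j := ih
    exact fun l => key l.length l rfl
  · intro b hby
    refine Finset.sum_induction _ (fun a => a + b = b) ?_ (zero_add b) ?_
    · intro u v hu hv
      rw [add_assoc, hv, hu]
    · rintro ⟨l, hlnd⟩ -
      by_cases h : (i :: l).Nodup ∧ (i :: l).getLast? = some j
      · rw [if_pos h]; exact hby l h.2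
      · rw [if_neg h, zero_add]
end
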